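/- Let α, σ be schedulers, t ∈ (0,1), γ̄ ∈ ℝ, ᾱ ∈ ℝ, σ̄ > 0, σ̄₀ > 0, and let p_data be a probability density on ℝ^d with compact support. Consider the CondOT inner schedulers ᾱ_s = sᾱ and σ̄_s = (1−s)σ̄₀ + sσ̄, the weights w₁(s) = (∂_s σ̄_s)/σ̄_s, w₂(s) = ∂_s ᾱ_s − ᾱ_s w₁(s), w₃(s) = −γ̄ w₁(s), the parameters μ(s) = (α_t, ᾱ_s + γ̄α_t)ᵀ and Σ(s) = [[σ_t², γ̄σ_t²], [γ̄σ_t², σ̄_s² + γ̄²σ_t²]], and the GLASS velocity field u_s(x̄|x_t) = w₁(s)x̄ + w₂(s)D_{μ(s),Σ(s)}(x_t, x̄) + w₃(s)x_t. Then for every x_t ∈ ℝ^d with p_t(x_t) > 0 and every ε ∈ ℝ^d, a single Euler step of size 1 at s = 0 starting from x̄₀ = γ̄x_t + σ̄₀ε yields x̄₀ + u₀(x̄₀|x_t) = γ̄x_t + ᾱD_t(x_t) + σ̄ε. -/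

import Mathlib

open MeasureTheory Real Matrix
open scoped BigOperators

noncomputable def gauss1 (y m v : ℝ) : ℝ :=
  (2 * Real.pi * v) ^ (-(1:ℝ)/2) * Real.exp (-(y - m)^2 / (2 * v))

noncomputable def gauss2 (x m : Fin 2 → ℝ) (S : Matrix (Fin 2) (Fin 2) ℝ) : ℝ :=
  (2 * Real.pi)⁻¹ * S.det ^ (-(1:ℝ)/2) *
    Real.exp (-(1/2) * ((x - m) ⬝ᵥ (S⁻¹ *ᵥ (x - m))))

noncomputable def suffStat (μ : Fin 2 → ℝ) (S : Matrix (Fin 2) (Fin 2) ℝ)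
    (x : Fin 2 → ℝ) : ℝ :=
  (μ ⬝ᵥ (S⁻¹ *ᵥ x)) / (μ ⬝ᵥ (S⁻¹ *ᵥ μ))

structure IsScheduler (α σ : ℝ → ℝ) : Prop where
  contDiff_a : ContDiffOn ℝ 1 α (Set.Icc 0 1)
  contDiff_s : ContDiffOn ℝ 1 σ (Set.Icc 0 1)
  a0 : α 0 = 0
  a1 : α 1 = 1
  s0 : σ 0 = 1
  s1 : σ 1 = 0
  mono_a : StrictMonoOn α (Set.Icc 0 1)
  anti_s : StrictAntiOn σ (Set.Icc 0 1)

def IsProbDensity {d : ℕ} (p : (Fin d → ℝ) → ℝ) : Prop :=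
  Measurable p ∧ (∀ z, 0 ≤ p z) ∧ (∫ z, p z) = 1

noncomputable def marginal {d : ℕ} (α σ : ℝ → ℝ) (p : (Fin d → ℝ) → ℝ)
    (t : ℝ) (x : Fin d → ℝ) : ℝ :=
  ∫ z, (∏ j, gauss1 (x j) (α t * z j) ((σ t)^2)) * p z

noncomputable def post {d : ℕ} (α σ : ℝ → ℝ) (p : (Fin d → ℝ) → ℝ)
    (t : ℝ) (z x : Fin d → ℝ) : ℝ :=
  (∏ j, gauss1 (x j) (α t * z j) ((σ t)^2)) * p z / marginal α σ p t x

noncomputable def denoiser {d : ℕ} (α σ : ℝ → ℝ) (p : (Fin d → ℝ) → ℝ)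
    (t : ℝ) (x : Fin d → ℝ) : Fin d → ℝ :=
  ∫ z, post α σ p t z x • z

noncomputable def glassLik {d : ℕ} (μ : Fin 2 → ℝ) (S : Matrix (Fin 2) (Fin 2) ℝ)
    (x1 x2 z : Fin d → ℝ) : ℝ :=
  ∏ j, gauss2 ![x1 j, x2 j] (z j • μ) S

noncomputable def glassZ {d : ℕ} (μ : Fin 2 → ℝ) (S : Matrix (Fin 2) (Fin 2) ℝ)
    (p : (Fin d → ℝ) → ℝ) (x1 x2 : Fin d → ℝ) : ℝ :=
  ∫ w, glassLik μ S x1 x2 w * p w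

noncomputable def glassPost {d : ℕ} (μ : Fin 2 → ℝ) (S : Matrix (Fin 2) (Fin 2) ℝ)
    (p : (Fin d → ℝ) → ℝ) (x1 x2 z : Fin d → ℝ) : ℝ :=
  glassLik μ S x1 x2 z * p z / glassZ μ S p x1 x2

noncomputable def glassDenoiser {d : ℕ} (μ : Fin 2 → ℝ) (S : Matrix (Fin 2) (Fin 2) ℝ)
    (p : (Fin d → ℝ) → ℝ) (x1 x2 : Fin d → ℝ) : Fin d → ℝ :=
  ∫ z, glassPost μ S p x1 x2 z • z

lemma gauss1_pos' (y m v : ℝ) (hv : 0 < v) : 0 < gauss1 y m v := by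
  unfold gauss1
  positivity

lemma gauss2_factor (a b c x1 x2 m : ℝ) (ha : 0 < a) (hb : 0 < b) :
    gauss2 ![x1, x2] ![m, c*m] !![a, a*c; a*c, b + c^2*a]
      = gauss1 x1 m a * gauss1 x2 (c*x1) b := by
  have hdet : (!![a, a*c; a*c, b + c^2*a]).det = a*b := by
    simp [Matrix.det_fin_two_of]; ring
  have hinv : (!![a, a*c; a*c, b + c^2*a])⁻¹
      = (a*b)⁻¹ • !![b + c^2*a, -(a*c); -(a*c), a] := by
    apply Matrix.inv_eq_right_inv
    ext i j
    fin_cases i <;> fin_cases j <;>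
      simp [Matrix.mul_apply, Fin.sum_univ_two, Matrix.smul_apply, Matrix.one_apply] <;>
      field_simp <;> ring
  have hquad : ((![x1,x2] - ![m, c*m]) ⬝ᵥ
      ((!![a, a*c; a*c, b + c^2*a])⁻¹ *ᵥ (![x1,x2] - ![m, c*m])))
      = (x1-m)^2/a + (x2 - c*x1)^2/b := by
    rw [hinv]
    simp [Matrix.mulVec, dotProduct, Fin.sum_univ_two]
    field_simp
    ring
  unfold gauss2 gauss1
  rw [hdet, hquad]
  have hnorm : (2*Real.pi*a) ^ (-(1:ℝ)/2) * (2*Real.pi*b) ^ (-(1:ℝ)/2)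
      = (2*Real.pi)⁻¹ * (a*b) ^ (-(1:ℝ)/2) := by
    have h2π : (0:ℝ) < 2*Real.pi := by positivity
    rw [Real.mul_rpow h2π.le ha.le, Real.mul_rpow h2π.le hb.le,
        Real.mul_rpow ha.le hb.le]
    have : (2*Real.pi) ^ (-(1:ℝ)/2) * (2*Real.pi) ^ (-(1:ℝ)/2) = (2*Real.pi)⁻¹ := by
      rw [← Real.rpow_add h2π]
      norm_num [Real.rpow_neg_one]
    calc (2*Real.pi) ^ (-(1:ℝ)/2) * a ^ (-(1:ℝ)/2) * ((2*Real.pi) ^ (-(1:ℝ)/2) * b ^ (-(1:ℝ)/2))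
        = ((2*Real.pi) ^ (-(1:ℝ)/2) * (2*Real.pi) ^ (-(1:ℝ)/2)) * (a ^ (-(1:ℝ)/2) * b ^ (-(1:ℝ)/2)) := by ring
      _ = (2*Real.pi)⁻¹ * (a ^ (-(1:ℝ)/2) * b ^ (-(1:ℝ)/2)) := by rw [this]
  have hexp : Real.exp (-(x1-m)^2/(2*a)) * Real.exp (-(x2-c*x1)^2/(2*b))
      = Real.exp (-(1/2) * ((x1-m)^2/a + (x2 - c*x1)^2/b)) := by
    rw [← Real.exp_add]
    congr 1
    field_simp
    ring
  calc (2*Real.pi)⁻¹ * (a*b) ^ (-(1:ℝ)/2) * Real.exp (-(1/2) * ((x1-m)^2/a + (x2 - c*x1)^2/b))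
      = ((2*Real.pi*a) ^ (-(1:ℝ)/2) * (2*Real.pi*b) ^ (-(1:ℝ)/2)) *
        (Real.exp (-(x1-m)^2/(2*a)) * Real.exp (-(x2-c*x1)^2/(2*b))) := by
        rw [hnorm, hexp]
    _ = _ := by ring

theorem stmt13 {d : ℕ} (α σ : ℝ → ℝ) (hsch : IsScheduler α σ)
    (t : ℝ) (ht : t ∈ Set.Ioo (0:ℝ) 1)
    (γb αb σb σ0 : ℝ) (hσb : 0 < σb) (hσ0 : 0 < σ0)
    (p : (Fin d → ℝ) → ℝ) (hp : IsProbDensity p) (hps : HasCompactSupport p)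
    (xt : Fin d → ℝ) (hxt : 0 < marginal α σ p t xt)
    (αs σs : ℝ → ℝ) (hαs : αs = fun s => s * αb)
    (hσs : σs = fun s => (1 - s) * σ0 + s * σb)
    (w1 w2 w3 : ℝ → ℝ)
    (hw1 : w1 = fun s => deriv σs s / σs s)
    (hw2 : w2 = fun s => deriv αs s - αs s * w1 s)
    (hw3 : w3 = fun s => -γb * w1 s)
    (μf : ℝ → Fin 2 → ℝ) (hμf : μf = fun s => ![α t, αs s + γb * α t])
    (Sf : ℝ → Matrix (Fin 2) (Fin 2) ℝ)
    (hSf : Sf = fun s => !![(σ t)^2, (σ t)^2 * γb;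
                            (σ t)^2 * γb, (σs s)^2 + γb^2 * (σ t)^2])
    (u : ℝ → (Fin d → ℝ) → (Fin d → ℝ))
    (hu : u = fun s xb =>
      w1 s • xb + w2 s • glassDenoiser (μf s) (Sf s) p xt xb + w3 s • xt) :
    ∀ ε : Fin d → ℝ,
      (γb • xt + σ0 • ε) + u 0 (γb • xt + σ0 • ε)
        = γb • xt + αb • denoiser α σ p t xt + σb • ε := by
  intro ε
  have hσt : 0 < σ t := by
    have h1 : σ 1 < σ t :=
      hsch.anti_s (Set.mem_Icc.2 ⟨ht.1.le, ht.2.le⟩) (Set.mem_Icc.2 ⟨zero_le_one, le_refl 1⟩) ht.2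
    rw [hsch.s1] at h1; exact h1
  set xb : Fin d → ℝ := γb • xt + σ0 • ε with hxbdef
  -- scalar values at 0
  have hαs0 : αs 0 = 0 := by rw [hαs]; simp
  have hσs0 : σs 0 = σ0 := by rw [hσs]; simp
  have hdα : deriv αs 0 = αb := by
    rw [hαs]
    have : HasDerivAt (fun s : ℝ => s * αb) αb 0 := by
      simpa using (hasDerivAt_id (0:ℝ)).mul_const αb
    exact this.deriv
  have hdσ : deriv σs 0 = σb - σ0 := by
    rw [hσs]
    have : HasDerivAt (fun s : ℝ => (1 - s) * σ0 + s * σb) (σb - σ0) 0 := by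
      have h1 : HasDerivAt (fun s : ℝ => (1 - s) * σ0) (-σ0) 0 := by
        simpa using ((hasDerivAt_const (0:ℝ) (1:ℝ)).sub (hasDerivAt_id (0:ℝ))).mul_const σ0
      have h2 : HasDerivAt (fun s : ℝ => s * σb) σb 0 := by
        simpa using (hasDerivAt_id (0:ℝ)).mul_const σb
      rw [show σb - σ0 = -σ0 + σb by ring]; exact h1.add h2
    exact this.deriv
  have hw10 : w1 0 = (σb - σ0) / σ0 := by rw [hw1]; simp [hdσ, hσs0]
  have hw20 : w2 0 = αb := by rw [hw2]; simp [hdα, hαs0, hw10]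
  have hw30 : w3 0 = -γb * ((σb - σ0) / σ0) := by rw [hw3]; simp [hw10]
  -- the GLASS denoiser at s = 0 equals the ordinary denoiser
  have hlik : ∀ z : Fin d → ℝ, glassLik (μf 0) (Sf 0) xt xb z
      = (∏ j, gauss1 (xt j) (α t * z j) ((σ t)^2)) *
        ∏ j, gauss1 (xb j) (γb * xt j) (σ0^2) := by
    intro z
    unfold glassLik
    rw [← Finset.prod_mul_distrib]
    refine Finset.prod_congr rfl fun j _ => ?_
    have hμ : z j • μf 0 = ![α t * z j, γb * (α t * z j)] := by
      rw [hμf]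
      funext i
      fin_cases i <;> simp [hαs0] <;> ring
    have hS : Sf 0 = !![(σ t)^2, (σ t)^2 * γb;
                        (σ t)^2 * γb, σ0^2 + γb^2 * (σ t)^2] := by
      rw [hSf]; simp [hσs0]
    rw [hμ, hS]
    have := gauss2_factor ((σ t)^2) (σ0^2) γb (xt j) (xb j) (α t * z j)
      (by positivity) (by positivity)
    simpa using this
  set C : ℝ := ∏ j, gauss1 (xb j) (γb * xt j) (σ0^2) with hCdef
  have hC : 0 < C := by
    refine Finset.prod_pos fun j _ => gauss1_pos' _ _ _ (by positivity)
  have hZ : glassZ (μf 0) (Sf 0) p xt xb = C * marginal α σ p t xt := by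
    unfold glassZ marginal
    rw [← MeasureTheory.integral_const_mul]
    refine congrArg _ (funext fun z => ?_)
    rw [hlik z]; ring
  have hpost : ∀ z : Fin d → ℝ, glassPost (μf 0) (Sf 0) p xt xb z = post α σ p t z xt := by
    intro z
    unfold glassPost post
    rw [hlik z, hZ]
    have hre : (∏ j, gauss1 (xt j) (α t * z j) ((σ t)^2)) * C * p z
        = C * ((∏ j, gauss1 (xt j) (α t * z j) ((σ t)^2)) * p z) := by ring
    rw [hre, mul_div_mul_left _ _ hC.ne']
  have hden : glassDenoiser (μf 0) (Sf 0) p xt xb = denoiser α σ p t xt := by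
    unfold glassDenoiser denoiser
    refine congrArg _ (funext fun z => ?_)
    rw [hpost z]
  -- final algebra
  rw [hu]
  simp only [hden, hw10, hw20, hw30]
  funext j
  simp only [Pi.add_apply, Pi.smul_apply, smul_eq_mul, hxbdef]
  field_simp
  ring
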